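/- Let κ̃ > 1/π. Then: (i) there exists a unique α̃₀ ∈ (0, 2κ̃] such that ∫₀^{π/2} √(α̃₀² + sin²y) dy = κ̃π; (ii) the function h(x) := ( ∫₀^{π/2} √(x² + sin²y) dy − κ̃π ) / ( 4 ∫₀^{π/2} dy/√(x² + sin²y) ) − x²/8, defined for x > 0, attains its global minimum on (0,∞) at the unique point x = α̃₀, and h(α̃₀) = −α̃₀²/8. -/

import Mathlib

/- Write `F x = ∫₀^{π/2} √(x² + sin²y) dy` and `G x = ∫₀^{π/2} dy / √(x² + sin²y)`.
Since `F 0 = 1 < κ̃π ≤ F (2κ̃)`, the intermediate value theorem produces `α̃₀`.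
The tangent line of `√` at `x² + s` lies above its graph, so
`√(x² + s) - √(α² + s) > (x² - α²) / (2√(x² + s))` for `x ≠ α`; with `s = sin²y`, integration gives
`F x - F α > (x² - α²) G x / 2`. This makes `F` strictly increasing on `(0, ∞)`, whence `α̃₀` is
unique, and, divided by `4 G x` at `α = α̃₀`, it is exactly `h x > -α̃₀² / 8 = h α̃₀`. -/

open MeasureTheory Real Set Filter Topology

noncomputable section

/-- The auxiliary function
`h(x) = (∫₀^{π/2} √(x² + sin²y) dy − κ̃π) / (4 ∫₀^{π/2} dy/√(x² + sin²y)) − x²/8`. -/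
def hfun (κt x : ℝ) : ℝ :=
  ((∫ y in (0:ℝ)..(π / 2), Real.sqrt (x ^ 2 + Real.sin y ^ 2)) - κt * π) /
      (4 * ∫ y in (0:ℝ)..(π / 2), 1 / Real.sqrt (x ^ 2 + Real.sin y ^ 2)) -
    x ^ 2 / 8

def sqrtSinIntegral (x : ℝ) : ℝ := ∫ y in (0:ℝ)..(π / 2), √(x ^ 2 + sin y ^ 2)

def invSqrtSinIntegral (x : ℝ) : ℝ := ∫ y in (0:ℝ)..(π / 2), 1 / √(x ^ 2 + sin y ^ 2)

lemma div_two_sqrt_lt_sqrt_sub_sqrt {a b : ℝ} (ha : 0 < a) (hb : 0 ≤ b) (hab : a ≠ b) :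
    (a - b) / (2 * √a) < √a - √b := by
  have hA : 0 < √a := sqrt_pos.2 ha
  have hAB : √a ≠ √b := fun h => hab (by rw [← sq_sqrt ha.le, ← sq_sqrt hb, h])
  rw [div_lt_iff₀ (by positivity)]
  nth_rw 1 [← sq_sqrt ha.le, ← sq_sqrt hb]
  nlinarith [sq_pos_of_ne_zero (sub_ne_zero.2 hAB)]

lemma sqrt_sq_add_sin_sq_pos {x : ℝ} (hx : 0 < x) (y : ℝ) : 0 < √(x ^ 2 + sin y ^ 2) :=
  sqrt_pos.2 (by positivity)

lemma continuous_sqrt_sq_add_sin_sq (x : ℝ) : Continuous fun y => √(x ^ 2 + sin y ^ 2) := by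
  fun_prop

lemma continuous_sqrtSinIntegral : Continuous sqrtSinIntegral :=
  intervalIntegral.continuous_parametric_intervalIntegral_of_continuous'
    (by fun_prop : Continuous fun p : ℝ × ℝ => √(p.1 ^ 2 + sin p.2 ^ 2)) _ _

lemma sqrtSinIntegral_zero : sqrtSinIntegral 0 = 1 := by
  have hsin : EqOn (fun y => √((0:ℝ) ^ 2 + sin y ^ 2)) sin (uIcc 0 (π / 2)) := by
    intro y hy
    rw [uIcc_of_le (by positivity)] at hy
    simp only [zero_pow two_ne_zero, zero_add]
    exact sqrt_sq (sin_nonneg_of_nonneg_of_le_pi hy.1 (by linarith [hy.2, pi_pos]))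
  rw [sqrtSinIntegral, intervalIntegral.integral_congr hsin, integral_sin]
  simp

lemma mul_pi_div_two_le_sqrtSinIntegral {x : ℝ} (hx : 0 ≤ x) :
    x * (π / 2) ≤ sqrtSinIntegral x := by
  calc x * (π / 2) = ∫ _ in (0:ℝ)..(π / 2), x := by simp [mul_comm]
    _ ≤ sqrtSinIntegral x :=
      intervalIntegral.integral_mono_on (by positivity) intervalIntegrable_const
        ((continuous_sqrt_sq_add_sin_sq x).intervalIntegrable _ _) fun y _ =>
          (sqrt_sq hx).symm.le.trans (sqrt_le_sqrt (by nlinarith [sq_nonneg (sin y)]))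

lemma invSqrtSinIntegral_pos {x : ℝ} (hx : 0 < x) : 0 < invSqrtSinIntegral x :=
  intervalIntegral.intervalIntegral_pos_of_pos
    ((continuous_const.div (continuous_sqrt_sq_add_sin_sq x)
      fun y => (sqrt_sq_add_sin_sq_pos hx y).ne').intervalIntegrable _ _)
    (fun y => one_div_pos.2 (sqrt_sq_add_sin_sq_pos hx y)) (by positivity)

lemma mul_invSqrtSinIntegral_lt_sub {x α : ℝ} (hx : 0 < x) (hα : 0 < α) (hxα : x ≠ α) :
    (x ^ 2 - α ^ 2) / 2 * invSqrtSinIntegral x < sqrtSinIntegral x - sqrtSinIntegral α := by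
  have hcont := continuous_sqrt_sq_add_sin_sq
  have hpt (y : ℝ) : (x ^ 2 - α ^ 2) / 2 * (1 / √(x ^ 2 + sin y ^ 2)) <
      √(x ^ 2 + sin y ^ 2) - √(α ^ 2 + sin y ^ 2) := by
    have hne : x ^ 2 + sin y ^ 2 ≠ α ^ 2 + sin y ^ 2 := by
      rw [Ne, add_left_inj, sq_eq_sq₀ hx.le hα.le]; exact hxα
    convert div_two_sqrt_lt_sqrt_sub_sqrt (by positivity) (by positivity) hne using 1
    field_simp
    ring
  rw [invSqrtSinIntegral, sqrtSinIntegral, sqrtSinIntegral,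
    ← intervalIntegral.integral_const_mul,
    ← intervalIntegral.integral_sub ((hcont x).intervalIntegrable _ _)
      ((hcont α).intervalIntegrable _ _)]
  refine intervalIntegral.integral_lt_integral_of_continuousOn_of_le_of_exists_lt (by positivity)
    (Continuous.continuousOn ?_) ((hcont x).sub (hcont α)).continuousOn
    (fun y _ => (hpt y).le) ⟨0, left_mem_Icc.2 (by positivity), hpt 0⟩
  exact continuous_const.mul
    (continuous_const.div (hcont x) fun y => (sqrt_sq_add_sin_sq_pos hx y).ne')

lemma strictMonoOn_sqrtSinIntegral : StrictMonoOn sqrtSinIntegral (Ioi 0) := by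
  intro a ha b hb hab
  have hgap := mul_invSqrtSinIntegral_lt_sub hb ha hab.ne'
  have hpos : 0 < (b ^ 2 - a ^ 2) / 2 * invSqrtSinIntegral b :=
    mul_pos (by nlinarith [mem_Ioi.1 ha]) (invSqrtSinIntegral_pos hb)
  linarith

lemma hfun_eq_sqrtSinIntegral (κt x : ℝ) :
    hfun κt x = (sqrtSinIntegral x - κt * π) / (4 * invSqrtSinIntegral x) - x ^ 2 / 8 := rfl

lemma hfun_of_sqrtSinIntegral_eq {κt α : ℝ} (hα : sqrtSinIntegral α = κt * π) :
    hfun κt α = -α ^ 2 / 8 := by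
  rw [hfun_eq_sqrtSinIntegral, hα, sub_self, zero_div]
  ring

lemma hfun_lt_hfun {κt α x : ℝ} (hα : 0 < α) (hακ : sqrtSinIntegral α = κt * π) (hx : 0 < x)
    (hxα : x ≠ α) : hfun κt α < hfun κt x := by
  have hG := invSqrtSinIntegral_pos hx
  have key := mul_invSqrtSinIntegral_lt_sub hx hα hxα
  rw [hfun_of_sqrtSinIntegral_eq hακ, hfun_eq_sqrtSinIntegral, ← hακ]
  have hquot : (x ^ 2 - α ^ 2) / 8 <
      (sqrtSinIntegral x - sqrtSinIntegral α) / (4 * invSqrtSinIntegral x) := by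
    rw [lt_div_iff₀ (by positivity)]
    linarith
  linarith

lemma exists_sqrtSinIntegral_eq {κt : ℝ} (hκt : 1 / π < κt) :
    ∃ α ∈ Ioc 0 (2 * κt), sqrtSinIntegral α = κt * π := by
  have hκπ : 1 < κt * π := by rwa [div_lt_iff₀ pi_pos] at hκt
  have hκ : 0 ≤ 2 * κt := by nlinarith [pi_pos]
  have hmem : κt * π ∈ Icc (sqrtSinIntegral 0) (sqrtSinIntegral (2 * κt)) := by
    refine ⟨by rw [sqrtSinIntegral_zero]; exact hκπ.le, ?_⟩
    calc κt * π = 2 * κt * (π / 2) := by ring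
      _ ≤ _ := mul_pi_div_two_le_sqrtSinIntegral hκ
  obtain ⟨α, hα, hακ⟩ := intermediate_value_Icc hκ continuous_sqrtSinIntegral.continuousOn hmem
  refine ⟨α, ⟨hα.1.lt_of_ne ?_, hα.2⟩, hακ⟩
  rintro rfl
  rw [sqrtSinIntegral_zero] at hακ
  exact hκπ.ne hακ

/-- Let `κ̃ > 1/π`.  Then (i) there is a unique `α̃₀ ∈ (0, 2κ̃]` with
`∫₀^{π/2} √(α̃₀² + sin²y) dy = κ̃π`; (ii) the function `h` attains its global minimum on
`(0,∞)` at the unique point `x = α̃₀`, and `h(α̃₀) = −α̃₀²/8`. -/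
theorem stmt10 (κt : ℝ) (hκt : 1 / π < κt) :
    ∃ α₀ : ℝ,
      (α₀ ∈ Ioc (0:ℝ) (2 * κt) ∧
        (∫ y in (0:ℝ)..(π / 2), Real.sqrt (α₀ ^ 2 + Real.sin y ^ 2)) = κt * π) ∧
      (∀ α ∈ Ioc (0:ℝ) (2 * κt),
        (∫ y in (0:ℝ)..(π / 2), Real.sqrt (α ^ 2 + Real.sin y ^ 2)) = κt * π →
          α = α₀) ∧
      (∀ x > 0, hfun κt α₀ ≤ hfun κt x) ∧
      (∀ x > 0, hfun κt x = hfun κt α₀ → x = α₀) ∧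
      hfun κt α₀ = -α₀ ^ 2 / 8 := by
  obtain ⟨α₀, hα₀, hα₀κ⟩ := exists_sqrtSinIntegral_eq hκt
  have hlt (x : ℝ) (hx : 0 < x) (hxα : x ≠ α₀) : hfun κt α₀ < hfun κt x :=
    hfun_lt_hfun hα₀.1 hα₀κ hx hxα
  refine ⟨α₀, ⟨hα₀, hα₀κ⟩, fun α hα hακ => ?_, fun x hx => ?_, fun x hx hxα => ?_,
    hfun_of_sqrtSinIntegral_eq hα₀κ⟩
  · exact strictMonoOn_sqrtSinIntegral.injOn hα.1 hα₀.1 (hακ.trans hα₀κ.symm)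
  · rcases eq_or_ne x α₀ with rfl | hne
    · exact le_rfl
    · exact (hlt x hx hne).le
  · by_contra hne
    exact (hlt x hx hne).ne' hxα
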